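/- arXiv:2403.04495 — 3 statements merged into one kernel-verified Lean document; each statement's English description precedes it below -/
import Mathlib

section
/- Let M = (m_i)_{i=0}^∞ be a sequence of integers with m_0 = 1 and m_i ≥ 2 for all i ≥ 1, and assume that for every index r ≥ 1 and every prime p, if p divides m_r then p ≥ r. Then for every pair of positive integers n and r, the number p_M(m_1 m_2 ⋯ m_r n − 1) is divisible by the product ∏_{t=2}^{r} m_t. -/
/-- `pM m n` = number of partitions of `n` into parts of the form `m 0 * m 1 * ⋯ * m r`. -/
noncomputable def pM (m : ℕ → ℕ) (n : ℕ) : ℕ :=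
  Nat.card {p : n.Partition // ∀ j ∈ p.parts, ∃ r : ℕ, j = ∏ i ∈ Finset.range (r + 1), m i}

/-!
Let `b_t(n)` count the partitions of `n` into the parts `1, m_{t+1}, m_{t+1} m_{t+2}, …`, so
that `p_M = b_0`. Splitting off the ones gives `b_t(m_{t+1} k + j) = ∑_{s ≤ k} b_{t+1}(s)` for
`j < m_{t+1}`. For an integer sequence `w` with `Δ^t w = 0` and `Q = m_{t+1} ⋯ m_{t+d}`, we show
by induction on `d` that `Q` divides `∑_{i < Q n} w(i) b_t(Q n - 1 - i)`. Since `b_t` is constant on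
blocks of length `m_{t+1}`, a summation by parts turns this sum into the analogous sum for
`t + 1`, of length `Q n / m_{t+1}`, with `w` replaced by `y ↦ v(y + 1)`, where
`v(x) = ∑_{l < m_{t+1} x} w(l)`. By Newton's formula `v(x)` is an integer combination of the
`C(m_{t+1} x, e + 1)` with `e < t`, each divisible by `m_{t+1}` because the prime factors of
`m_{t+1}` exceed `t`; and `v / m_{t+1}` satisfies `Δ^{t+1} = 0`, so the induction hypothesis
applies. The theorem is the case `t = 1`, `w = 1`.
-/

open Finset fwdDiff

section FiniteDifferences

variable {G : Type*} [AddCommGroup G] {w : ℕ → G} {d : ℕ}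

theorem fwdDiff_iter_eq_zero_of_le (hw : Δ_[1] ^[d] w = 0) {e : ℕ} (he : d ≤ e) :
    Δ_[1] ^[e] w = 0 := by
  obtain ⟨c, rfl⟩ := Nat.exists_eq_add_of_le he
  rw [add_comm, Function.iterate_add_apply, hw]
  exact Function.iterate_fixed (by ext; simp [fwdDiff]) c

theorem eq_sum_choose_smul_of_fwdDiff_iter_eq_zero (hw : Δ_[1] ^[d] w = 0) (l : ℕ) :
    w l = ∑ k ∈ range d, l.choose k • Δ_[1] ^[k] w 0 := by
  have hnewton := shift_eq_sum_fwdDiff_iter 1 w l 0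
  rw [zero_add, smul_eq_mul, mul_one] at hnewton
  rw [hnewton, sum_subset (range_subset_range.2 (Nat.le_add_right (l + 1) d)),
    ← sum_subset (range_subset_range.2 (Nat.le_add_left d (l + 1)))]
  · intro k _ hk
    rw [fwdDiff_iter_eq_zero_of_le hw (by simpa using hk), Pi.zero_apply, smul_zero]
  · intro k _ hk
    rw [Nat.choose_eq_zero_of_lt (by simpa using hk), zero_smul]

theorem fwdDiff_iter_comp_mul_add_eq_zero (hw : Δ_[1] ^[d] w = 0) (a c : ℕ) :
    Δ_[1] ^[d] (fun x ↦ w (a * x + c)) = 0 := by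
  induction d generalizing w c with
  | zero => ext x; exact congrFun hw _
  | succ d ih =>
    have htelescope : Δ_[1] (fun x ↦ w (a * x + c)) =
        ∑ i ∈ range a, fun x ↦ Δ_[1] w (a * x + (c + i)) := by
      ext x
      have := sum_range_sub (fun i ↦ w (a * x + c + i)) a
      simp only [add_zero] at this
      rw [Finset.sum_apply, fwdDiff, show a * (x + 1) + c = a * x + c + a by ring, ← this]
      simp only [fwdDiff, add_assoc]
    rw [Function.iterate_succ_apply, htelescope, fwdDiff_iter_finsetSum]
    exact sum_eq_zero fun i _ ↦ ih hw (c + i)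

theorem fwdDiff_iter_succ_sum_range_mul_eq_zero (hw : Δ_[1] ^[d] w = 0) (a : ℕ) :
    Δ_[1] ^[d + 1] (fun x ↦ ∑ l ∈ range (a * x), w l) = 0 := by
  have hblock : Δ_[1] (fun x ↦ ∑ l ∈ range (a * x), w l) = ∑ i ∈ range a, fun x ↦ w (a * x + i) := by
    ext x
    simp only [fwdDiff, Finset.sum_apply, mul_add, mul_one, sum_range_add, add_sub_cancel_left]
  rw [Function.iterate_succ_apply, hblock, fwdDiff_iter_finsetSum]
  exact sum_eq_zero fun i _ ↦ fwdDiff_iter_comp_mul_add_eq_zero hw a i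

end FiniteDifferences

theorem Nat.Coprime.dvd_choose_of_dvd {a n e : ℕ} (h : a.Coprime e) (hn : a ∣ n) :
    a ∣ n.choose e := by
  obtain _ | k := e
  · rw [(Nat.coprime_zero_right a).1 h]
    exact one_dvd _
  obtain _ | n := n
  · simp
  refine h.dvd_of_dvd_mul_right ?_
  rw [← Nat.add_one_mul_choose_eq]
  exact hn.mul_right _

theorem Nat.sum_range_choose_eq_choose_add_one (k N : ℕ) :
    ∑ l ∈ range N, l.choose k = N.choose (k + 1) := by
  induction N with
  | zero => simp
  | succ N ih => rw [sum_range_succ, ih, Nat.choose_succ_succ', add_comm]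

section BlockSums

variable {w : ℕ → ℤ} {d a : ℕ}

theorem dvd_sum_range_mul_of_fwdDiff_iter_eq_zero (hw : Δ_[1] ^[d] w = 0)
    (ha : ∀ p, p.Prime → p ∣ a → d < p) (x : ℕ) : (a : ℤ) ∣ ∑ l ∈ range (a * x), w l := by
  simp_rw [eq_sum_choose_smul_of_fwdDiff_iter_eq_zero hw, nsmul_eq_mul]
  rw [sum_comm]
  refine dvd_sum fun k hk ↦ ?_
  have hcop : a.Coprime (k + 1) := Nat.coprime_of_dvd fun p hp hpa hpk ↦ by
    have := Nat.le_of_dvd k.succ_pos hpk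
    have := ha p hp hpa
    simp only [mem_range] at hk
    omega
  rw [← sum_mul, ← Nat.cast_sum, Nat.sum_range_choose_eq_choose_add_one]
  exact (Int.natCast_dvd_natCast.2 (hcop.dvd_choose_of_dvd (dvd_mul_right a x))).mul_right _

theorem exists_mul_eq_sum_range_mul (hw : Δ_[1] ^[d] w = 0) (ha₀ : a ≠ 0)
    (ha : ∀ p, p.Prime → p ∣ a → d < p) :
    ∃ v : ℕ → ℤ, Δ_[1] ^[d + 1] v = 0 ∧ ∀ x, ∑ l ∈ range (a * x), w l = a * v x := by
  set v : ℕ → ℤ := fun x ↦ (∑ l ∈ range (a * x), w l) / a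
  have hv : (a : ℤ) • v = fun x ↦ ∑ l ∈ range (a * x), w l := by
    ext x
    exact Int.mul_ediv_cancel' (dvd_sum_range_mul_of_fwdDiff_iter_eq_zero hw ha x)
  refine ⟨v, ?_, fun x ↦ (congrFun hv x).symm⟩
  have := fwdDiff_iter_succ_sum_range_mul_eq_zero hw a
  rw [← hv, fwdDiff_iter_const_smul] at this
  exact (smul_eq_zero.1 this).resolve_left (by exact_mod_cast ha₀)

end BlockSums

section Convolution

variable {R : Type*} [NonUnitalNonAssocSemiring R]

def convSum (f g : ℕ → R) (N : ℕ) : R :=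
  ∑ i ∈ range N, f i * g (N - 1 - i)

-- Both sides are the coefficient of `X ^ (N - 1)` in `f(X) g(X) / (1 - X)`.
theorem convSum_prefixSum (f g : ℕ → R) (N : ℕ) :
    convSum (fun i ↦ ∑ j ∈ range (i + 1), f j) g N =
      convSum f (fun i ↦ ∑ j ∈ range (i + 1), g j) N := by
  simp only [convSum, sum_mul, mul_sum, range_eq_Ico]
  rw [← sum_Ico_Ico_comm]
  refine sum_congr rfl fun j hj ↦ ?_
  rw [sum_Ico_reflect (fun k ↦ f j * g k) j (by omega)]
  congr 1
  simp only [mem_Ico] at hj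
  congr 1 <;> omega

theorem one_convSum {S : Type*} [NonAssocSemiring S] (g : ℕ → S) (N : ℕ) :
    convSum (fun _ ↦ 1) g N = ∑ i ∈ range N, g i := by
  simp only [convSum, one_mul, sum_range_reflect]

theorem sum_range_mul_eq_sum_sum_range {M : Type*} [AddCommMonoid M] (f : ℕ → M) (a K : ℕ) :
    ∑ i ∈ range (a * K), f i = ∑ y ∈ range K, ∑ j ∈ range a, f (a * y + j) := by
  induction K with
  | zero => simp
  | succ K ih => rw [mul_add_one, sum_range_add, ih, sum_range_succ]

theorem convSum_mul_of_blockwise_const {f g : ℕ → R} {a : ℕ} (G : ℕ → R)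
    (hg : ∀ q, ∀ j < a, g (a * q + j) = G q) (K : ℕ) :
    convSum f g (a * K) = convSum (fun y ↦ ∑ j ∈ range a, f (a * y + j)) G K := by
  rw [convSum, sum_range_mul_eq_sum_sum_range, convSum]
  refine sum_congr rfl fun y hy ↦ ?_
  rw [sum_mul]
  refine sum_congr rfl fun j hj ↦ ?_
  obtain ⟨z, rfl⟩ := Nat.exists_eq_add_of_lt (mem_range.1 hy)
  have hj := mem_range.1 hj
  rw [show a * (y + z + 1) - 1 - (a * y + j) = a * (y + z + 1 - 1 - y) + (a - 1 - j) by
    rw [show y + z + 1 - 1 - y = z by omega, show a * (y + z + 1) = a * y + a * z + a by ring]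
    omega, hg _ _ (by omega)]

end Convolution

noncomputable def partitionCount (S : ℕ → Prop) (n : ℕ) : ℕ :=
  Nat.card {p : n.Partition // ∀ x ∈ p.parts, S x}

theorem Multiset.exists_eq_replicate_one_add_map_mul {T : ℕ → Prop} {a : ℕ} {P : Multiset ℕ}
    (hP : ∀ x ∈ P, 0 < x ∧ (x = 1 ∨ ∃ i, T i ∧ x = a * i)) :
    ∃ c, ∃ Q : Multiset ℕ, (∀ i ∈ Q, 0 < i ∧ T i) ∧ P = replicate c 1 + Q.map (a * ·) := by
  induction P using Multiset.induction with
  | empty => exact ⟨0, 0, by simp⟩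
  | cons x P ih =>
    obtain ⟨c, Q, hQ, rfl⟩ := ih fun y hy ↦ hP y (mem_cons_of_mem hy)
    obtain ⟨hx, rfl | ⟨i, hi, rfl⟩⟩ := hP x (mem_cons_self x _)
    · exact ⟨c + 1, Q, hQ, by rw [replicate_succ, cons_add]⟩
    · exact ⟨c, i ::ₘ Q, forall_mem_cons.2 ⟨⟨Nat.pos_of_mul_pos_left hx, hi⟩, hQ⟩,
        by rw [map_cons, add_cons]⟩

theorem Multiset.eq_of_replicate_one_add_map_mul_eq {a c c' : ℕ} {Q Q' : Multiset ℕ}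
    (ha : 2 ≤ a) (hQ : ∀ i ∈ Q, 0 < i) (hQ' : ∀ i ∈ Q', 0 < i)
    (h : replicate c 1 + Q.map (a * ·) = replicate c' 1 + Q'.map (a * ·)) : c = c' ∧ Q = Q' := by
  have hone (Q : Multiset ℕ) (hQ : ∀ i ∈ Q, 0 < i) : (Q.map (a * ·)).count 1 = 0 :=
    count_eq_zero.2 fun h1 ↦ by
      obtain ⟨i, hi, hai⟩ := mem_map.1 h1
      have := hQ i hi
      nlinarith
  obtain rfl : c = c' := by simpa [hone Q hQ, hone Q' hQ'] using congrArg (count 1) h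
  exact ⟨rfl, map_injective (mul_right_injective₀ (by omega)) (add_left_cancel h)⟩

def Nat.Partition.replicateOneAddMapMul {a : ℕ} (ha : 0 < a) (j : ℕ) {k s : ℕ} (hs : s ≤ k)
    (q : s.Partition) : (a * k + j).Partition where
  parts := Multiset.replicate (a * (k - s) + j) 1 + q.parts.map (a * ·)
  parts_pos := by
    simp only [Multiset.mem_add, Multiset.mem_replicate, Multiset.mem_map]
    rintro _ (⟨-, rfl⟩ | ⟨i, hi, rfl⟩)
    · exact one_pos
    · exact Nat.mul_pos ha (q.parts_pos hi)
  parts_sum := by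
    rw [Multiset.sum_add, Multiset.sum_replicate, smul_eq_mul, mul_one,
      Multiset.sum_map_mul_left, Multiset.map_id', q.parts_sum, add_right_comm, ← mul_add,
      Nat.sub_add_cancel hs]

theorem partitionCount_mul_add {S T : ℕ → Prop} {a j : ℕ} (ha : 2 ≤ a) (hj : j < a)
    (hS : ∀ x, S x ↔ x = 1 ∨ ∃ i, T i ∧ x = a * i) (k : ℕ) :
    partitionCount S (a * k + j) = ∑ s ∈ range (k + 1), partitionCount T s := by
  let F : (Σ s : Fin (k + 1), {q : (s : ℕ).Partition // ∀ x ∈ q.parts, T x}) →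
      {p : (a * k + j).Partition // ∀ x ∈ p.parts, S x} := fun q ↦
    ⟨.replicateOneAddMapMul (by omega) j (Nat.lt_succ_iff.1 q.1.2) q.2.1, by
      simp only [Nat.Partition.replicateOneAddMapMul, Multiset.mem_add, Multiset.mem_replicate,
        Multiset.mem_map]
      rintro _ (⟨-, rfl⟩ | ⟨i, hi, rfl⟩)
      · exact (hS 1).2 (Or.inl rfl)
      · exact (hS _).2 (Or.inr ⟨i, q.2.2 i hi, rfl⟩)⟩
  have hF : F.Bijective := by
    constructor
    · rintro ⟨s, q, hq⟩ ⟨s', q', hq'⟩ h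
      obtain ⟨hc, hqq⟩ := Multiset.eq_of_replicate_one_add_map_mul_eq ha
        (fun _ ↦ q.parts_pos) (fun _ ↦ q'.parts_pos) (congrArg (fun p ↦ p.1.parts) h)
      dsimp only at hc
      obtain rfl : s = s' := Fin.ext (by
        have := Nat.eq_of_mul_eq_mul_left (by omega : 0 < a) (Nat.add_right_cancel hc)
        have := s.2
        have := s'.2
        omega)
      obtain rfl : q = q' := Nat.Partition.ext hqq
      rfl
    · rintro ⟨p, hp⟩
      obtain ⟨c, Q, hQ, hpQ⟩ := Multiset.exists_eq_replicate_one_add_map_mul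
        fun x hx ↦ ⟨p.parts_pos hx, (hS x).1 (hp x hx)⟩
      have hsum : c + a * Q.sum = a * k + j := by
        rw [← p.parts_sum, hpQ, Multiset.sum_add, Multiset.sum_replicate, smul_eq_mul, mul_one,
          Multiset.sum_map_mul_left, Multiset.map_id']
      have hQk : Q.sum < k + 1 := Nat.lt_of_mul_lt_mul_left (a := a) (by rw [mul_add_one]; omega)
      have hc : c = a * (k - Q.sum) + j := by
        rw [Nat.mul_sub]
        have := Nat.mul_le_mul_left a (Nat.lt_succ_iff.1 hQk)
        omega
      refine ⟨⟨⟨Q.sum, hQk⟩, ⟨Q, fun hi ↦ (hQ _ hi).1, rfl⟩, fun i hi ↦ (hQ i hi).2⟩, ?_⟩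
      exact Subtype.ext (Nat.Partition.ext (by rw [hpQ, hc]; rfl))
  rw [partitionCount, ← Nat.card_eq_of_bijective F hF, Nat.card_sigma,
    ← Fin.sum_univ_eq_sum_range (partitionCount T)]
  rfl

section TailProducts

variable {m : ℕ → ℕ}

def tailProd (m : ℕ → ℕ) (t d : ℕ) : ℕ :=
  ∏ u ∈ range d, m (t + 1 + u)

theorem tailProd_succ (t d : ℕ) : tailProd m t (d + 1) = m (t + 1) * tailProd m (t + 1) d := by
  rw [tailProd, prod_range_succ', mul_comm, tailProd, add_zero]
  exact congrArg _ (prod_congr rfl fun u _ ↦ by congr 1; omega)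

theorem prod_Icc_eq_tailProd (m : ℕ → ℕ) (t r : ℕ) :
    ∏ u ∈ Icc (t + 1) r, m u = tailProd m t (r - t) := by
  rw [← Ico_add_one_right_eq_Icc, prod_Ico_eq_prod_range, tailProd, Nat.add_sub_add_right]

theorem tailProd_pos (hm : ∀ i, 1 ≤ i → 2 ≤ m i) (t d : ℕ) : 0 < tailProd m t d :=
  prod_pos fun u _ ↦ by have := hm (t + 1 + u) (by omega); omega

noncomputable def tailCount (m : ℕ → ℕ) (t : ℕ) : ℕ → ℕ :=
  partitionCount fun x ↦ ∃ d, x = tailProd m t d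

theorem pM_eq_tailCount (hm0 : m 0 = 1) : pM m = tailCount m 0 := by
  have hprod (r : ℕ) : ∏ i ∈ range (r + 1), m i = tailProd m 0 r := by
    rw [prod_range_succ', hm0, mul_one, tailProd]
    exact prod_congr rfl fun u _ ↦ by rw [zero_add, add_comm]
  ext n
  simp only [pM, tailCount, partitionCount, hprod]

theorem tailCount_mul_add {t j : ℕ} (hm : 2 ≤ m (t + 1)) (hj : j < m (t + 1)) (k : ℕ) :
    tailCount m t (m (t + 1) * k + j) = ∑ s ∈ range (k + 1), tailCount m (t + 1) s := by
  refine partitionCount_mul_add hm hj (fun x ↦ ⟨?_, ?_⟩) k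
  · rintro ⟨_ | d, rfl⟩
    · exact Or.inl (prod_range_zero _)
    · exact Or.inr ⟨_, ⟨d, rfl⟩, tailProd_succ t d⟩
  · rintro (rfl | ⟨_, ⟨d, rfl⟩, rfl⟩)
    · exact ⟨0, (prod_range_zero _).symm⟩
    · exact ⟨d + 1, (tailProd_succ t d).symm⟩

theorem tailProd_dvd_convSum (hm : ∀ i, 1 ≤ i → 2 ≤ m i)
    (hprime : ∀ r, 1 ≤ r → ∀ p : ℕ, p.Prime → p ∣ m r → r ≤ p) (d : ℕ) {t : ℕ} {w : ℕ → ℤ}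
    (hw : Δ_[1] ^[t] w = 0) (n : ℕ) :
    (tailProd m t d : ℤ) ∣ convSum w (fun i ↦ (tailCount m t i : ℤ)) (tailProd m t d * n) := by
  induction d generalizing t w with
  | zero => simp [tailProd]
  | succ d ih =>
    set a := m (t + 1)
    set K := tailProd m (t + 1) d * n
    have ha : 2 ≤ a := hm _ le_add_self
    obtain ⟨v, hv, hsum⟩ := exists_mul_eq_sum_range_mul hw (by omega : a ≠ 0)
      fun p hp hpa ↦ hprime (t + 1) le_add_self p hp hpa
    have hv' : Δ_[1] ^[t + 1] (fun y ↦ v (y + 1)) = 0 := by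
      ext y
      rw [fwdDiff_iter_comp_add, hv]
      rfl
    have hstep : convSum w (fun i ↦ (tailCount m t i : ℤ)) (a * K) =
        a * convSum (fun y ↦ v (y + 1)) (fun i ↦ (tailCount m (t + 1) i : ℤ)) K := by
      rw [convSum_mul_of_blockwise_const (fun q ↦ ∑ s ∈ range (q + 1), (tailCount m (t + 1) s : ℤ))
        (fun q j hj ↦ by rw [tailCount_mul_add ha hj]; push_cast; rfl), ← convSum_prefixSum]
      simp only [convSum, mul_sum, ← sum_range_mul_eq_sum_sum_range, hsum, mul_assoc]
    rw [tailProd_succ, mul_assoc, Nat.cast_mul, hstep]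
    exact mul_dvd_mul_left _ (ih hv')

end TailProducts

theorem pM_congruence_large_prime_factors_general (m : ℕ → ℕ) (hm0 : m 0 = 1)
    (hm : ∀ i, 1 ≤ i → 2 ≤ m i)
    (hprime : ∀ r, 1 ≤ r → ∀ p : ℕ, p.Prime → p ∣ m r → r ≤ p)
    (n r : ℕ) (hn : 1 ≤ n) :
    (∏ t ∈ Finset.Icc 2 r, m t) ∣ pM m ((∏ t ∈ Finset.Icc 1 r, m t) * n - 1) := by
  obtain _ | r := r
  · simp
  have hQ : ∏ t ∈ Icc 2 (r + 1), m t = tailProd m 1 r := by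
    simpa using prod_Icc_eq_tailProd m 1 (r + 1)
  have hM : ∏ t ∈ Icc 1 (r + 1), m t = m 1 * tailProd m 1 r := by
    simpa [tailProd_succ] using prod_Icc_eq_tailProd m 0 (r + 1)
  rw [hQ, hM, mul_assoc]
  set K := tailProd m 1 r * n
  have hK : 0 < K := Nat.mul_pos (tailProd_pos hm 1 r) hn
  have hm1 := hm 1 le_rfl
  have harg : m 1 * K - 1 = m 1 * (K - 1) + (m 1 - 1) := by
    obtain ⟨K', hK'⟩ := Nat.exists_eq_add_one_of_ne_zero hK.ne'
    rw [hK', mul_add_one, Nat.add_sub_cancel]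
    omega
  rw [harg, pM_eq_tailCount hm0, tailCount_mul_add hm1 (by omega : m 1 - 1 < m 1),
    Nat.sub_add_cancel hK]
  have hconv : (tailProd m 1 r : ℤ) ∣ convSum (fun _ ↦ 1) (fun i ↦ (tailCount m 1 i : ℤ)) K :=
    tailProd_dvd_convSum hm hprime r (by ext; simp [fwdDiff]) n
  rw [one_convSum] at hconv
  exact_mod_cast hconv

/-- If every prime factor `p` of `m_r` satisfies `p ≥ r`, then `∏_{t=2}^{r} m_t`
divides `p_M(m₁ m₂ ⋯ m_r n - 1)` for all positive integers `n`, `r`. -/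
theorem pM_congruence_large_prime_factors (m : ℕ → ℕ) (hm0 : m 0 = 1)
    (hm : ∀ i, 1 ≤ i → 2 ≤ m i)
    (hprime : ∀ r, 1 ≤ r → ∀ p : ℕ, p.Prime → p ∣ m r → r ≤ p)
    (n r : ℕ) (hn : 1 ≤ n) (hr : 1 ≤ r) :
    (∏ t ∈ Finset.Icc 2 r, m t) ∣ pM m ((∏ t ∈ Finset.Icc 1 r, m t) * n - 1) :=
  pM_congruence_large_prime_factors_general m hm0 hm hprime n r hn
end

section
/- For all integers m ≥ 2, r ≥ 2 and every i with 1 ≤ i ≤ r, the number (m·i)/gcd(m·i, r) divides α_{m,r}(i). In particular, m/gcd(m, r) divides α_{m,r}(i) for all such i. -/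
/-!
As `binom(N + r - 1, r) = multichoose N r`, the hypothesis is an identity
`multichoose (m n) r = ∑ α_j multichoose n j` between polynomials in `n`, so it holds at `n = -k`:
`(-1)^r binom(m k, r) = ∑ (-1)^j α_j binom(k, j)`. Binomial inversion (the `i`-th forward
difference at `0`) gives `(-1)^i α_i = ∑_k (-1)^(i-k) binom(i, k) (-1)^r binom(m k, r)`.
Since `i ∣ k binom(i, k)` and `m k ∣ r binom(m k, r)`, every term times `r` is divisible by `m i`,
so `m i ∣ r α_i`; cancelling `gcd(m i, r)` gives the first claim and, from `m ∣ r α_i`, the second.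
-/

open Finset Polynomial fwdDiff

theorem Int.multichoose_natCast (n k : ℕ) :
    Ring.multichoose (n : ℤ) k = ((n + k - 1).choose k : ℤ) :=
  rfl

theorem Int.multichoose_neg_natCast (n k : ℕ) :
    Ring.multichoose (-(n : ℤ)) k = (-1) ^ k * (n.choose k : ℤ) := by
  have h := Ring.choose_neg' (-(n : ℤ)) k
  rw [neg_neg, Ring.choose_natCast, Units.smul_def, smul_eq_mul, Int.coe_negOnePow_natCast] at h
  rw [h, ← mul_assoc, ← mul_pow]
  norm_num

theorem Int.multichoose_mul_eq_sum_of_forall_pos (m : ℤ) (r : ℕ) (s : Finset ℕ) (c : ℕ → ℤ)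
    (h : ∀ n : ℕ, 1 ≤ n →
      Ring.multichoose (m * n) r = ∑ j ∈ s, c j * Ring.multichoose (n : ℤ) j)
    (x : ℤ) : Ring.multichoose (m * x) r = ∑ j ∈ s, c j * Ring.multichoose x j := by
  set p : ℚ[X] :=
    Ring.multichoose (C (m : ℚ) * X) r - ∑ j ∈ s, C (c j : ℚ) * Ring.multichoose X j
  have eval_multichoose (q : ℚ[X]) (y : ℚ) (k : ℕ) :
      (Ring.multichoose q k).eval y = Ring.multichoose (q.eval y) k :=
    Ring.map_multichoose (evalRingHom y) q k
  have cast_multichoose (a : ℤ) (k : ℕ) :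
      ((Ring.multichoose a k : ℤ) : ℚ) = Ring.multichoose (a : ℚ) k :=
    Ring.map_multichoose (Int.castRingHom ℚ) a k
  have eval_p (y : ℤ) : p.eval (y : ℚ) =
      ((Ring.multichoose (m * y) r - ∑ j ∈ s, c j * Ring.multichoose y j : ℤ) : ℚ) := by
    simp only [p, eval_sub, eval_finsetSum, eval_mul, eval_C, eval_X, eval_multichoose,
      Int.cast_sub, Int.cast_sum, Int.cast_mul, cast_multichoose]
  have p_eq_zero : p = 0 := by
    refine eq_zero_of_infinite_isRoot p (Set.infinite_of_injective_forall_mem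
      (f := fun n : ℕ ↦ ((n + 1 : ℕ) : ℚ)) (fun a b hab ↦ by simpa using hab) fun n ↦ ?_)
    have := eval_p (n + 1 : ℕ)
    rw [h (n + 1) n.succ_pos, sub_self, Int.cast_zero] at this
    exact_mod_cast this
  have := eval_p x
  rwa [p_eq_zero, eval_zero, eq_comm, Int.cast_eq_zero, sub_eq_zero] at this

theorem neg_one_pow_mul_choose_mul_eq_sum (m r : ℕ) (s : Finset ℕ) (α : ℕ → ℤ)
    (hα : ∀ n : ℕ, 1 ≤ n →
      ((m * n + r - 1).choose r : ℤ) = ∑ j ∈ s, α j * ((n + j - 1).choose j))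
    (k : ℕ) : (-1) ^ r * ((m * k).choose r : ℤ) = ∑ j ∈ s, α j * (-1) ^ j * k.choose j := by
  have h := Int.multichoose_mul_eq_sum_of_forall_pos m r s α (fun n hn ↦ by
    simpa only [← Nat.cast_mul, Int.multichoose_natCast] using hα n hn) (-k)
  simpa only [mul_neg, ← Nat.cast_mul, Int.multichoose_neg_natCast, ← mul_assoc] using h

theorem sum_alternating_choose_mul_eq_of_eq_sum_choose (F c : ℕ → ℤ) (s : Finset ℕ)
    (hF : ∀ k, F k = ∑ j ∈ s, c j * k.choose j) {i : ℕ} (hi : i ∈ s) :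
    ∑ k ∈ range (i + 1), (-1) ^ (i - k) * i.choose k * F k = c i := by
  have hF' : F = ∑ j ∈ s, c j • fun k : ℕ ↦ (k.choose j : ℤ) := by
    ext k
    simp [hF]
  calc ∑ k ∈ range (i + 1), (-1) ^ (i - k) * i.choose k * F k = Δ_[1] ^[i] F 0 := by
        simp [fwdDiff_iter_eq_sum_shift]
    _ = c i := by
        simp only [hF', fwdDiff_iter_finsetSum, fwdDiff_iter_const_smul, Finset.sum_apply,
          Pi.smul_apply, fwdDiff_iter_choose_zero, smul_eq_mul, mul_ite, mul_one, mul_zero,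
          Finset.sum_ite_eq, if_pos hi]

theorem Nat.dvd_mul_choose (n k : ℕ) : n ∣ k * n.choose k := by
  rcases n with _ | n
  · rcases k with _ | k <;> simp
  · rcases k with _ | k
    · simp
    · exact ⟨n.choose k, by rw [mul_comm, ← Nat.add_one_mul_choose_eq]⟩

theorem Nat.mul_dvd_mul_choose_mul_choose (m i k r : ℕ) :
    m * i ∣ r * (i.choose k * (m * k).choose r) := by
  rcases k.eq_zero_or_pos with rfl | hk
  · rcases r with _ | r <;> simp
  · apply Nat.dvd_of_mul_dvd_mul_right hk
    have := Nat.mul_dvd_mul (Nat.dvd_mul_choose (m * k) r) (Nat.dvd_mul_choose i k)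
    convert this using 1 <;> ring

theorem Int.natCast_div_gcd_dvd_of_dvd_mul {a b : ℕ} {c : ℤ} (hb : 0 < b)
    (h : (a : ℤ) ∣ b * c) : ((a / a.gcd b : ℕ) : ℤ) ∣ c := by
  have hg : 0 < a.gcd b := Nat.gcd_pos_of_pos_right a hb
  apply (Nat.isCoprime_iff_coprime.2 (Nat.coprime_div_gcd_div_gcd hg)).dvd_of_dvd_mul_left
  rw [← mul_dvd_mul_iff_left (show (a.gcd b : ℤ) ≠ 0 by positivity), ← mul_assoc,
    ← Nat.cast_mul, ← Nat.cast_mul, Nat.mul_div_cancel' (Nat.gcd_dvd_left a b),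
    Nat.mul_div_cancel' (Nat.gcd_dvd_right a b)]
  exact h

theorem mu_dvd_alpha_general (m r i : ℕ) (hi1 : 1 ≤ i) (hir : i ≤ r)
    (α : ℕ → ℤ)
    (hα : ∀ n : ℕ, 1 ≤ n →
      ((m * n + r - 1).choose r : ℤ) =
        ∑ j ∈ Finset.Icc 1 r, α j * ((n + j - 1).choose j)) :
    ((m * i / Nat.gcd (m * i) r : ℕ) : ℤ) ∣ α i ∧
      ((m / Nat.gcd m r : ℕ) : ℤ) ∣ α i := by
  have inversion := sum_alternating_choose_mul_eq_of_eq_sum_choose _ _ _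
    (neg_one_pow_mul_choose_mul_eq_sum m r _ α hα) (mem_Icc.2 ⟨hi1, hir⟩)
  have hdvd : ((m * i : ℕ) : ℤ) ∣ r * α i := by
    rw [← ((isUnit_neg_one (α := ℤ)).pow i).dvd_mul_right, mul_assoc, ← inversion, mul_sum]
    refine dvd_sum fun k _ ↦ ?_
    have := Int.natCast_dvd_natCast.2 (Nat.mul_dvd_mul_choose_mul_choose m i k r)
    push_cast at this ⊢
    convert this.mul_left ((-1) ^ (i - k) * (-1) ^ r) using 1
    ring
  have hr : 0 < r := by omega
  have hm_dvd : (m : ℤ) ∣ r * α i := (Int.natCast_dvd_natCast.2 (dvd_mul_right m i)).trans hdvd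
  exact ⟨Int.natCast_div_gcd_dvd_of_dvd_mul hr hdvd, Int.natCast_div_gcd_dvd_of_dvd_mul hr hm_dvd⟩

/-- `(m·i)/gcd(m·i, r)` divides `α_{m,r}(i)`; in particular `m/gcd(m,r)` divides
`α_{m,r}(i)`. -/
theorem mu_dvd_alpha (m r i : ℕ) (hm : 2 ≤ m) (hr : 2 ≤ r) (hi1 : 1 ≤ i) (hir : i ≤ r)
    (α : ℕ → ℤ)
    (hα : ∀ n : ℕ, 1 ≤ n →
      ((m * n + r - 1).choose r : ℤ) =
        ∑ j ∈ Finset.Icc 1 r, α j * ((n + j - 1).choose j)) :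
    ((m * i / Nat.gcd (m * i) r : ℕ) : ℤ) ∣ α i ∧
      ((m / Nat.gcd m r : ℕ) : ℤ) ∣ α i :=
  mu_dvd_alpha_general m r i hi1 hir α hα
end

section
/- Let m ≥ 2 and r ≥ 1 be integers and take m_1 = m_2 = … = m_r = m. Then there exist integers β_{(j_1,…,j_s)}, indexed by the nonempty sequences 1 ≤ j_1 < … < j_s ≤ r with 1 ≤ s ≤ r−1, such that H_{(m,…,m)} (r copies) = m^{1+2+⋯+r} · h_r − Σ_{s=1}^{r−1} Σ_{1 ≤ j_1 < … < j_s ≤ r} β_{(j_1,…,j_s)} · H_{(m,…,m)} (s copies appearing according to the index sequence), and each β_{(j_1,…,j_s)} is divisible by m^{r−s}/gcd(m, 2). -/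
/-- The operator `U_m` on `ℤ⟦q⟧`, sending `∑ a(n) qⁿ` to `∑ a(m·n) qⁿ`. -/
noncomputable def U (m : ℕ) (f : PowerSeries ℤ) : PowerSeries ℤ :=
  PowerSeries.mk fun n => PowerSeries.coeff (m * n) f

/-- `h r = q / (1-q)^(r+1)`; here `invUnitsSub 1` is the inverse of `1 - q` in `ℤ⟦q⟧`. -/
noncomputable def h (r : ℕ) : PowerSeries ℤ :=
  PowerSeries.X * (PowerSeries.invUnitsSub (1 : ℤˣ)) ^ (r + 1)

/-- Auxiliary: the series `H` defined by recursion on a reversed index list. -/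
noncomputable def HserRev : List ℕ → PowerSeries ℤ
  | [] => PowerSeries.X * PowerSeries.invUnitsSub (1 : ℤˣ)
  | mhead :: rest => U mhead (PowerSeries.invUnitsSub (1 : ℤˣ) * HserRev rest)

/-- `Hser [m₁, …, m_k] = H_{(m₁,…,m_k)}`: one has `Hser [] = H_∅ = q/(1-q)` and
`H_{(m₁,…,m_k)} = U_{m_k}((1/(1-q)) · H_{(m₁,…,m_{k-1})})`. -/
noncomputable def Hser (l : List ℕ) : PowerSeries ℤ := HserRev l.reverse

/-!
Write `S = 1/(1-q)`, `H_k` for `H_{(m,…,m)}` with `k` copies of `m`, and `M_r` for the `ℤ`-span of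
the series `(m^(r-s)/gcd(m,2)) · H_s`, `1 ≤ s < r`. We show `m^(1+⋯+r) · h_r ≡ H_r (mod M_r)` by
strong induction on `r`.

Substituting `Y = 1 - (1-q)^m` for `q` in `(1-q)^(-n)` gives `(1-q)^(-mn)`. Since the `n`-th
coefficient of `h_i` is the `i`-th coefficient of `(1-q)^(-n)`, comparing coefficients gives
`U_m h_r = ∑_{i ≤ r} [q^r] Y^i · h_i`. As `Y = m q - C(m,2) q² + ⋯`, the coefficient of `h_r` is
`m^r` and that of `h_(r-1)` is `-(r-1) C(m,2) m^(r-2)`, which `m^(r-1)/gcd(m,2)` divides.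
Now `f ↦ U_m(S f)` maps `h_r` to `U_m h_(r+1)`, `H_s` to `H_(s+1)` and `M_r` into `M_(r+1)`;
applying it to the congruence for `r` and rewriting the lower `h_i` by the congruences for
`i ≤ r` gives the congruence for `r + 1`.
-/

open Finset PowerSeries

section

variable {R : Type*} [CommRing R]

theorem coeff_subst_eq_sum_range {b : R⟦X⟧} (hb : constantCoeff b = 0) (f : R⟦X⟧) (r : ℕ) :
    coeff r (f.subst b) = ∑ i ∈ range (r + 1), coeff i f * coeff r (b ^ i) := by
  rw [coeff_subst' (HasSubst.of_constantCoeff_zero' hb)]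
  refine finsum_eq_sum_of_support_subset _ fun i hi => ?_
  obtain ⟨c, rfl⟩ := X_dvd_iff.mpr hb
  by_contra hir
  rw [coe_range, Set.mem_Iio, not_lt] at hir
  rw [Function.mem_support, mul_pow, coeff_X_pow_mul', if_neg (by omega), smul_zero] at hi
  exact hi rfl

theorem coeff_one_sub_X_pow (m k : ℕ) :
    coeff k ((1 - X : R⟦X⟧) ^ m) = (-1) ^ k * m.choose k := by
  induction m generalizing k with
  | zero => cases k <;> simp [coeff_one]
  | succ m ih =>
    rw [pow_succ, mul_sub, mul_one, map_sub, ih, mul_comm]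
    cases k with
    | zero => simp
    | succ k =>
      rw [coeff_succ_mul_X, ih, Nat.choose_succ_succ', Nat.cast_add, pow_succ]
      ring

end

noncomputable def Y (m : ℕ) : ℤ⟦X⟧ := 1 - (1 - X) ^ m

noncomputable def Z (m : ℕ) : ℤ⟦X⟧ := mk fun k => (-1) ^ k * m.choose (k + 1)

theorem X_mul_Z (m : ℕ) : X * Z m = Y m := by
  ext k
  cases k with
  | zero => simp [Y]
  | succ k => simp [Y, Z, coeff_succ_X_mul, coeff_one_sub_X_pow, pow_succ]

theorem constantCoeff_Y (m : ℕ) : constantCoeff (Y m) = 0 := by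
  rw [← X_mul_Z, map_mul, constantCoeff_X, zero_mul]

theorem coeff_add_Y_pow (m r k : ℕ) : coeff (r + k) (Y m ^ r) = coeff k (Z m ^ r) := by
  rw [← X_mul_Z, mul_pow, add_comm, coeff_X_pow_mul]

theorem coeff_Y_pow_self (m r : ℕ) : coeff r (Y m ^ r) = (m : ℤ) ^ r := by
  simpa [coeff_zero_eq_constantCoeff, Z] using coeff_add_Y_pow m r 0

theorem coeff_succ_Y_pow (m r : ℕ) :
    coeff (r + 1) (Y m ^ r) = -(r * m.choose 2 * (m : ℤ) ^ (r - 1)) := by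
  rw [coeff_add_Y_pow, coeff_one_pow]
  simp [Z]

theorem coeff_U (m : ℕ) (f : ℤ⟦X⟧) (n : ℕ) : coeff n (U m f) = coeff (m * n) f :=
  coeff_mk _ _

noncomputable def Ulinear (m : ℕ) : ℤ⟦X⟧ →ₗ[ℤ] ℤ⟦X⟧ where
  toFun := U m
  map_add' f g := by ext; simp [coeff_U]
  map_smul' c f := by ext n; simp only [RingHom.id_apply, coeff_U, map_zsmul]

theorem invUnitsSub_one_pow (d : ℕ) : invUnitsSub (1 : ℤˣ) ^ d = invOneSubPow ℤ d := by
  induction d with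
  | zero => simp [invOneSubPow_zero]
  | succ d ih =>
    rw [pow_succ, ih, invOneSubPow_add, Units.val_mul, invOneSubPow_val_one_eq_invUnitSub_one]

theorem invUnitsSub_one_mul_h (r : ℕ) : invUnitsSub (1 : ℤˣ) * h r = h (r + 1) := by
  rw [h, h, pow_succ _ (r + 1)]
  ring

theorem coeff_zero_h (r : ℕ) : coeff 0 (h r) = 0 := by
  simp [h]

/-- Both sides are `C(n - 1 + r, r)`. -/
theorem coeff_h {n : ℕ} (hn : n ≠ 0) (r : ℕ) :
    coeff n (h r) = coeff r (invOneSubPow ℤ n : ℤ⟦X⟧) := by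
  obtain ⟨k, rfl⟩ := Nat.exists_eq_succ_of_ne_zero hn
  rw [h, coeff_succ_X_mul, invUnitsSub_one_pow, invOneSubPow_val_succ_eq_mk_add_choose,
    invOneSubPow_val_succ_eq_mk_add_choose, coeff_mk, coeff_mk, Nat.choose_symm_add, add_comm]

theorem subst_Y_invOneSubPow (m n : ℕ) :
    (invOneSubPow ℤ n : ℤ⟦X⟧).subst (Y m) = invOneSubPow ℤ (m * n) := by
  have hY := HasSubst.of_constantCoeff_zero' (constantCoeff_Y m)
  set φ : ℤ⟦X⟧ →ₐ[ℤ] ℤ⟦X⟧ := substAlgHom hY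
  have hinv (k : ℕ) : ((invOneSubPow ℤ k)⁻¹ : ℤ⟦X⟧ˣ) = (1 - X : ℤ⟦X⟧) ^ k := by
    rw [← Units.inv_eq_val_inv, invOneSubPow_inv_eq_one_sub_pow]
  have hφ : φ ((1 - X) ^ n) = (1 - X) ^ (m * n) := by
    rw [map_pow, map_sub, map_one, coe_substAlgHom, subst_X hY, Y, sub_sub_cancel, pow_mul]
  have hmul : (invOneSubPow ℤ n : ℤ⟦X⟧).subst (Y m) * (1 - X) ^ (m * n) = 1 := by
    rw [← hφ, ← coe_substAlgHom hY, ← map_mul, ← hinv, Units.mul_inv, map_one]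
  rwa [← inv_inv (invOneSubPow ℤ (m * n)), ← Units.mul_eq_one_iff_eq_inv, hinv]

theorem U_h {m : ℕ} (hm : m ≠ 0) (r : ℕ) :
    U m (h r) = ∑ i ∈ range (r + 1), coeff r (Y m ^ i) • h i := by
  ext n
  rw [coeff_U, map_sum]
  simp only [map_zsmul, smul_eq_mul]
  rcases Nat.eq_zero_or_pos n with rfl | hn
  · simp [coeff_zero_h]
  rw [coeff_h (by positivity), ← subst_Y_invOneSubPow,
    coeff_subst_eq_sum_range (constantCoeff_Y m)]
  refine sum_congr rfl fun i _ => ?_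
  rw [coeff_h hn.ne', mul_comm]

noncomputable def Hrep (m k : ℕ) : ℤ⟦X⟧ := Hser (List.replicate k m)

theorem Hrep_zero (m : ℕ) : Hrep m 0 = h 0 := by
  simp [Hrep, Hser, HserRev, h]

theorem Hrep_succ (m k : ℕ) : Hrep m (k + 1) = U m (invUnitsSub (1 : ℤˣ) * Hrep m k) := by
  rw [Hrep, Hrep, Hser, Hser, List.reverse_replicate, List.reverse_replicate,
    List.replicate_succ, HserRev]

def powDivGcdTwo (m k : ℕ) : ℤ := ((m ^ k / Nat.gcd m 2 : ℕ) : ℤ)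

theorem powDivGcdTwo_add {a : ℕ} (ha : a ≠ 0) (m b : ℕ) :
    powDivGcdTwo m (a + b) = powDivGcdTwo m a * (m : ℤ) ^ b := by
  have hg : Nat.gcd m 2 ∣ m ^ a := (Nat.gcd_dvd_left m 2).trans (dvd_pow_self m ha)
  rw [powDivGcdTwo, powDivGcdTwo, pow_add, ← Nat.div_mul_right_comm hg]
  push_cast
  rfl

theorem powDivGcdTwo_dvd_pow {k : ℕ} (hk : k ≠ 0) (m : ℕ) : powDivGcdTwo m k ∣ (m : ℤ) ^ k := by
  have hg : Nat.gcd m 2 ∣ m ^ k := (Nat.gcd_dvd_left m 2).trans (dvd_pow_self m hk)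
  rw [powDivGcdTwo]
  exact_mod_cast Nat.div_dvd_of_dvd hg

theorem powDivGcdTwo_one_dvd_choose_two (m : ℕ) : powDivGcdTwo m 1 ∣ (m.choose 2 : ℤ) := by
  rw [powDivGcdTwo, pow_one]
  norm_cast
  have hg : 0 < Nat.gcd m 2 := Nat.gcd_pos_of_pos_right m two_pos
  have hchoose : m.choose 2 * 2 = m * (m - 1) := by
    rw [Nat.choose_two_right, Nat.div_mul_cancel (Nat.even_mul_pred_self m).two_dvd]
  refine (Nat.coprime_div_gcd_div_gcd hg).dvd_of_dvd_mul_right ⟨m - 1, ?_⟩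
  refine Nat.eq_of_mul_eq_mul_right hg ?_
  rw [Nat.mul_assoc, Nat.div_mul_cancel (Nat.gcd_dvd_right m 2), hchoose, Nat.mul_right_comm,
    Nat.div_mul_cancel (Nat.gcd_dvd_left m 2)]

def properIndexSets (r : ℕ) : Finset (Finset ℕ) :=
  (Icc 1 r).powerset.filter fun J => J.Nonempty ∧ J ≠ Icc 1 r

theorem one_le_card_and_card_lt_of_mem_properIndexSets {r : ℕ} {J : Finset ℕ}
    (hJ : J ∈ properIndexSets r) : 1 ≤ #J ∧ #J < r := by
  simp only [properIndexSets, mem_filter, mem_powerset] at hJ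
  obtain ⟨hsub, hne, hneq⟩ := hJ
  have := card_lt_card (Finset.ssubset_iff_subset_ne.mpr ⟨hsub, hneq⟩)
  rw [Nat.card_Icc] at this
  exact ⟨hne.card_pos, by omega⟩

theorem Icc_mem_properIndexSets {r s : ℕ} (hs : 1 ≤ s) (hsr : s < r) :
    Icc 1 s ∈ properIndexSets r := by
  simp only [properIndexSets, mem_filter, mem_powerset]
  refine ⟨Icc_subset_Icc_right hsr.le, nonempty_Icc.mpr hs, fun h => ?_⟩
  have := congrArg card h
  simp only [Nat.card_Icc] at this
  omega

/-- Indexed by the sets `J` of the statement, so that membership yields the coefficients `β J`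
directly. -/
noncomputable def correctionSpan (m r : ℕ) : Submodule ℤ ℤ⟦X⟧ :=
  Submodule.span ℤ
    ((fun J => powDivGcdTwo m (r - #J) • Hrep m #J) '' (properIndexSets r : Set (Finset ℕ)))

theorem correctionSpan_one (m : ℕ) : correctionSpan m 1 = ⊥ := by
  have : properIndexSets 1 = ∅ :=
    eq_empty_of_forall_notMem fun J hJ => by
      have := one_le_card_and_card_lt_of_mem_properIndexSets hJ
      omega
  simp [correctionSpan, this]

theorem smul_Hrep_mem_correctionSpan {m r s : ℕ} {c : ℤ} (hs : 1 ≤ s) (hsr : s < r)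
    (hc : powDivGcdTwo m (r - s) ∣ c) : c • Hrep m s ∈ correctionSpan m r := by
  obtain ⟨e, rfl⟩ := hc
  rw [mul_comm, mul_smul]
  refine Submodule.smul_mem _ e (Submodule.subset_span ⟨Icc 1 s, ?_, ?_⟩)
  · exact Icc_mem_properIndexSets hs hsr
  · simp only [Nat.card_Icc, Nat.add_sub_cancel]

theorem smul_mem_correctionSpan {m r k : ℕ} {c : ℤ} (hc : (m : ℤ) ^ k ∣ c) {x : ℤ⟦X⟧}
    (hx : x ∈ correctionSpan m r) : c • x ∈ correctionSpan m (r + k) := by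
  refine (Submodule.span_le.2 ?_ :
    correctionSpan m r ≤ (correctionSpan m (r + k)).comap (c • LinearMap.id)) hx
  rintro _ ⟨J, hJ, rfl⟩
  obtain ⟨hJ1, hJr⟩ := one_le_card_and_card_lt_of_mem_properIndexSets hJ
  simp only [SetLike.mem_coe, Submodule.mem_comap, LinearMap.smul_apply, LinearMap.id_apply,
    smul_smul]
  refine smul_Hrep_mem_correctionSpan hJ1 (by omega) ?_
  rw [show r + k - #J = (r - #J) + k by omega, powDivGcdTwo_add (by omega), mul_comm c]
  exact mul_dvd_mul_left _ hc

theorem U_mul_mem_correctionSpan {m r : ℕ} {x : ℤ⟦X⟧} (hx : x ∈ correctionSpan m r) :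
    U m (invUnitsSub (1 : ℤˣ) * x) ∈ correctionSpan m (r + 1) := by
  refine (Submodule.span_le.2 ?_ : correctionSpan m r ≤ (correctionSpan m (r + 1)).comap
    ((Ulinear m).comp (LinearMap.mulLeft ℤ (invUnitsSub (1 : ℤˣ))))) hx
  rintro _ ⟨J, hJ, rfl⟩
  obtain ⟨hJ1, hJr⟩ := one_le_card_and_card_lt_of_mem_properIndexSets hJ
  simp only [SetLike.mem_coe, Submodule.mem_comap, LinearMap.comp_apply, LinearMap.mulLeft_apply,
    map_zsmul]
  rw [show Ulinear m _ = U m _ from rfl, ← Hrep_succ]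
  refine smul_Hrep_mem_correctionSpan (by omega) (by omega) ?_
  rw [Nat.add_sub_add_right]

theorem exists_eq_sum_smul_of_mem_span_image {R M ι : Type*} [CommRing R] [AddCommGroup M]
    [Module R M] {F : Finset ι} {d : ι → R} {v : ι → M} {x : M}
    (hx : x ∈ Submodule.span R ((fun i => d i • v i) '' (F : Set ι))) :
    ∃ β : ι → R, x = ∑ i ∈ F, β i • v i ∧ ∀ i ∈ F, d i ∣ β i := by
  obtain ⟨l, hl, rfl⟩ := (Finsupp.mem_span_image_iff_linearCombination R).1 hx
  refine ⟨fun i => l i * d i, ?_, fun i _ => dvd_mul_left _ _⟩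
  rw [Finsupp.linearCombination_apply_of_mem_supported R hl]
  simp only [mul_smul]

def tri (r : ℕ) : ℕ := ∑ t ∈ Icc 1 r, t

theorem tri_succ (r : ℕ) : tri (r + 1) = tri r + (r + 1) :=
  sum_Icc_succ_top (by omega) _

theorem tri_add_le {i r : ℕ} (hi : 1 ≤ i) (hir : i < r) : tri i + (r + 1 - i) ≤ tri r := by
  induction r, hir using Nat.le_induction with
  | base => rw [tri_succ]; omega
  | succ r hir ih => rw [tri_succ]; omega

theorem smul_pow_tri_smul_h_mem {m i k : ℕ} {c : ℤ} (hi : 1 ≤ i) (hk : k ≠ 0)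
    (hP : (m : ℤ) ^ tri i • h i - Hrep m i ∈ correctionSpan m i)
    (hd : powDivGcdTwo m k ∣ c) (hmc : i = 1 ∨ (m : ℤ) ^ k ∣ c) :
    c • (m : ℤ) ^ tri i • h i ∈ correctionSpan m (i + k) := by
  rw [← add_sub_cancel (Hrep m i) ((m : ℤ) ^ tri i • h i), smul_add]
  refine add_mem (smul_Hrep_mem_correctionSpan hi (by omega) (by simpa using hd)) ?_
  rcases hmc with rfl | hmc
  · rw [correctionSpan_one, Submodule.mem_bot] at hP
    rw [hP, smul_zero]
    exact zero_mem _
  · exact smul_mem_correctionSpan hmc hP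

theorem pow_tri_smul_h_sub_Hrep_succ {m : ℕ} (hm : m ≠ 0) (r : ℕ) :
    (m : ℤ) ^ tri (r + 1) • h (r + 1) - Hrep m (r + 1) =
      U m (invUnitsSub (1 : ℤˣ) * ((m : ℤ) ^ tri r • h r - Hrep m r)) -
        ∑ i ∈ range (r + 1), ((m : ℤ) ^ tri r * coeff (r + 1) (Y m ^ i)) • h i := by
  set x := (m : ℤ) ^ tri r • h r - Hrep m r
  have hU : Hrep m (r + 1) =
      (m : ℤ) ^ tri r • U m (h (r + 1)) - U m (invUnitsSub (1 : ℤˣ) * x) := by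
    rw [Hrep_succ, show Hrep m r = (m : ℤ) ^ tri r • h r - x by simp [x], mul_sub,
      mul_smul_comm, invUnitsSub_one_mul_h]
    exact (Ulinear m).map_sub _ _ |>.trans (by rw [map_zsmul]; rfl)
  rw [hU, U_h hm, sum_range_succ, coeff_Y_pow_self, tri_succ, pow_add, smul_add, smul_sum]
  simp only [mul_smul]
  abel

theorem pow_tri_mul_coeff_smul_h_mem {m r i : ℕ} (hir : i ≤ r)
    (IH : ∀ j ≤ r, (m : ℤ) ^ tri j • h j - Hrep m j ∈ correctionSpan m j) :
    ((m : ℤ) ^ tri r * coeff (r + 1) (Y m ^ i)) • h i ∈ correctionSpan m (r + 1) := by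
  rcases Nat.eq_zero_or_pos i with rfl | hi1
  · simp [coeff_one]
  rcases hir.lt_or_eq with hir | rfl
  · obtain ⟨e, he, hie⟩ : ∃ e, r + 1 - i ≤ e ∧ tri r = tri i + e :=
      ⟨tri r - tri i, by have := tri_add_le hi1 hir; omega, by have := tri_add_le hi1 hir; omega⟩
    have hdvd : (m : ℤ) ^ (r + 1 - i) ∣ (m : ℤ) ^ e * coeff (r + 1) (Y m ^ i) :=
      (pow_dvd_pow _ he).mul_right _
    rw [hie, pow_add, mul_assoc, mul_comm, mul_smul]
    have := smul_pow_tri_smul_h_mem hi1 (by omega) (IH i hir.le)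
      ((powDivGcdTwo_dvd_pow (by omega) m).trans hdvd) (Or.inr hdvd)
    rwa [Nat.add_sub_cancel' (by omega : i ≤ r + 1)] at this
  · rw [coeff_succ_Y_pow, mul_comm, mul_smul]
    refine smul_pow_tri_smul_h_mem hi1 one_ne_zero (IH i le_rfl) ?_ ?_
    · exact ((powDivGcdTwo_one_dvd_choose_two m).mul_left _ |>.mul_right _).neg_right
    · rcases Nat.lt_or_ge 1 i with h1 | h1
      · exact Or.inr (((pow_dvd_pow (m : ℤ) (by omega : 1 ≤ i - 1)).mul_left _).neg_right)
      · exact Or.inl (by omega)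

theorem pow_tri_smul_h_sub_Hrep_mem {m : ℕ} (hm : m ≠ 0) (r : ℕ) :
    (m : ℤ) ^ tri r • h r - Hrep m r ∈ correctionSpan m r := by
  induction r using Nat.strong_induction_on with
  | _ r IH =>
  rcases r with _ | r
  · simp [tri, Hrep_zero]
  rw [pow_tri_smul_h_sub_Hrep_succ hm]
  refine sub_mem (U_mul_mem_correctionSpan (IH r r.lt_succ_self)) (sum_mem fun i hi => ?_)
  exact pow_tri_mul_coeff_smul_h_mem (Nat.lt_succ_iff.mp (mem_range.mp hi))
    fun j hj => IH j (Nat.lt_succ_of_le hj)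

theorem H_constant_beta_dvd_general (m r : ℕ) (hm : 2 ≤ m) :
    ∃ β : Finset ℕ → ℤ,
      (Hser (List.replicate r m) =
        PowerSeries.C ((m : ℤ) ^ (∑ t ∈ Finset.Icc 1 r, t)) * h r -
          ∑ J ∈ (Finset.Icc 1 r).powerset.filter
              (fun J => J.Nonempty ∧ J ≠ Finset.Icc 1 r),
            PowerSeries.C (β J) * Hser (List.replicate J.card m)) ∧
      ∀ J ∈ (Finset.Icc 1 r).powerset.filter
          (fun J => J.Nonempty ∧ J ≠ Finset.Icc 1 r),
        ((m ^ (r - J.card) / Nat.gcd m 2 : ℕ) : ℤ) ∣ β J := by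
  obtain ⟨β, hβ, hdvd⟩ :=
    exists_eq_sum_smul_of_mem_span_image (pow_tri_smul_h_sub_Hrep_mem (by omega : m ≠ 0) r)
  refine ⟨β, ?_, hdvd⟩
  simp only [← smul_eq_C_mul]
  change Hrep m r = (m : ℤ) ^ tri r • h r - ∑ J ∈ properIndexSets r, β J • Hrep m #J
  rw [← hβ, sub_sub_cancel]

/-- The constant case `m₁ = ⋯ = m_r = m`: there exist integers `β_{(j₁,…,j_s)}` with
`H_{(m,…,m)} = m^{1+2+⋯+r} · h_r - ∑ β_{(j₁,…,j_s)} · H_{(m,…,m)}` (with `s` copies of `m`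
in the summand indexed by `{j₁ < … < j_s}`), and `m^{r-s}/gcd(m,2)` divides each
`β_{(j₁,…,j_s)}`. -/
theorem H_constant_beta_dvd (m r : ℕ) (hm : 2 ≤ m) (hr : 1 ≤ r) :
    ∃ β : Finset ℕ → ℤ,
      (Hser (List.replicate r m) =
        PowerSeries.C ((m : ℤ) ^ (∑ t ∈ Finset.Icc 1 r, t)) * h r -
          ∑ J ∈ (Finset.Icc 1 r).powerset.filter
              (fun J => J.Nonempty ∧ J ≠ Finset.Icc 1 r),
            PowerSeries.C (β J) * Hser (List.replicate J.card m)) ∧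
      ∀ J ∈ (Finset.Icc 1 r).powerset.filter
          (fun J => J.Nonempty ∧ J ≠ Finset.Icc 1 r),
        ((m ^ (r - J.card) / Nat.gcd m 2 : ℕ) : ℤ) ∣ β J :=
  H_constant_beta_dvd_general m r hm
end
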